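/- Define f_n(x) = ∑_{k=1}^{n} |sin(kπx)|/k. For coprime p, q with q ≥ 1 and n ≥ q², there exist δ > 0 and a constant c > 0 such that for all |ε| < δ, f_n(p/q + ε) - f_n(p/q) ≥ c|ε| + O(ε²); in particular f_n(p/q + ε) - f_n(p/q) ≥ (c/2)|ε| for all sufficiently small ε. -/

import Mathlib

noncomputable def f (n : ℕ) (x : ℝ) : ℝ :=
  ∑ k ∈ Finset.Icc 1 n, |Real.sin (k * Real.pi * x)| / k

/-!
Near `x = p / q` the `k`-th term `|sin (k π x)| / k` is smooth with slope `π cos (π r / q)`, where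
`r ≡ k p (mod q)`, unless `q ∣ k`, where it has a kink and grows like `π |ε|`. Since `p` is a
unit mod `q`, the slopes are a function of `k mod q` that is odd under `r ↦ q - r`, so they cancel
over each period and any partial sum of them is at most `q - 1` in absolute value. The
`⌊n / q⌋ ≥ q` kinks therefore win, and the Taylor remainders only cost `O(n² ε²)`.
-/

open Real Finset

lemma abs_sin_add_int_mul_pi (x : ℝ) (t : ℤ) : |sin (x + t * π)| = |sin x| := by
  rw [sin_add_int_mul_pi, abs_mul, abs_neg_one_zpow, one_mul]

lemma cos_mul_sub_sq_le_abs_sin_add_sub {θ s : ℝ} (hθ : 0 ≤ sin θ) (hs : |s| ≤ 1) :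
    cos θ * s - s ^ 2 ≤ |sin (θ + s)| - sin θ := by
  have hcos : 1 - s ^ 2 / 2 ≤ cos s := one_sub_sq_div_two_le_cos
  have hcube : |s| ^ 3 ≤ s ^ 2 := by
    rw [← sq_abs s, pow_succ]; exact mul_le_of_le_one_right (by positivity) hs
  have hsin : cos θ * (s - sin s) ≤ s ^ 2 / 6 := calc
    cos θ * (s - sin s) ≤ |s - sin s| := by
      refine (le_abs_self _).trans ?_
      rw [abs_mul]; exact mul_le_of_le_one_left (abs_nonneg _) (abs_cos_le_one θ)
    _ ≤ |s| ^ 3 / 6 := abs_sub_sin_le s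
    _ ≤ s ^ 2 / 6 := by linarith
  calc cos θ * s - s ^ 2 ≤ sin θ * cos s + cos θ * sin s - sin θ := by
        nlinarith [sin_le_one θ, sq_nonneg s]
    _ = sin (θ + s) - sin θ := by rw [sin_add]
    _ ≤ |sin (θ + s)| - sin θ := by gcongr; exact le_abs_self _

lemma abs_sub_sq_le_abs_sin {s : ℝ} (hs : |s| ≤ 1) : |s| - s ^ 2 ≤ |sin s| := by
  have hpos := cos_mul_sub_sq_le_abs_sin_add_sub (θ := 0) (by simp) hs
  have hneg := cos_mul_sub_sq_le_abs_sin_add_sub (θ := 0) (by simp) (s := -s) (by rwa [abs_neg])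
  simp only [cos_zero, sin_zero, zero_add, sub_zero, one_mul, sin_neg, abs_neg, neg_sq] at hpos hneg
  cases abs_cases s <;> linarith

/-- The derivative of `|sin|` at `π * y.val / q` when `y ≠ 0`; at `y = 0` the kink of `|sin|` is
accounted for separately, so the value `0` there is a convention. -/
noncomputable def absSinSlope (q : ℕ) (y : ZMod q) : ℝ :=
  if y = 0 then 0 else cos (π * y.val / q)

lemma card_filter_natCast_mul_eq_zero {q : ℕ} {u : ZMod q} (hu : IsUnit u) (n : ℕ) :
    #{k ∈ Icc 1 n | ((k : ℕ) : ZMod q) * u = 0} = n / q := by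
  rw [← Nat.Ioc_filter_dvd_card_eq_div, ← Icc_add_one_left_eq_Ioc, zero_add]
  congr 1
  exact filter_congr fun k _ => by rw [hu.mul_left_eq_zero, ZMod.natCast_eq_zero_iff]

section Residues

variable {q : ℕ} [NeZero q]

lemma absSinSlope_neg (y : ZMod q) : absSinSlope q (-y) = -absSinSlope q y := by
  by_cases hy : y = 0
  · simp [absSinSlope, hy]
  have hval : ((-y).val : ℝ) = q - y.val := by
    rw [ZMod.neg_val, if_neg hy, Nat.cast_sub (ZMod.val_lt y).le]
  have hq : (q : ℝ) ≠ 0 := NeZero.ne _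
  rw [absSinSlope, absSinSlope, if_neg (neg_ne_zero.mpr hy), if_neg hy, hval, ← cos_pi_sub]
  congr 1
  field_simp

lemma sum_absSinSlope_eq_zero : ∑ y : ZMod q, absSinSlope q y = 0 := by
  have h := Equiv.sum_comp (Equiv.neg (ZMod q)) (absSinSlope q)
  simp only [Equiv.neg_apply, absSinSlope_neg, sum_neg_distrib] at h
  linarith

lemma sum_absSinSlope_mul_eq_zero {u : ZMod q} (hu : IsUnit u) :
    ∑ x : ZMod q, absSinSlope q (x * u) = 0 := by
  obtain ⟨u, rfl⟩ := hu
  rw [← sum_absSinSlope_eq_zero (q := q), ← Equiv.sum_comp (Units.mulRight u) (absSinSlope q)]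
  rfl

lemma sum_range_add_eq_sum_univ (g : ZMod q → ℝ) (a : ZMod q) :
    ∑ k ∈ range q, g (a + k) = ∑ x, g x := by
  rw [← Equiv.sum_comp (Equiv.addLeft a) g]
  refine sum_nbij' (fun k => (k : ZMod q)) ZMod.val (fun _ _ => mem_univ _)
    (fun x _ => mem_range.mpr (ZMod.val_lt x)) (fun k hk => ZMod.val_cast_of_lt (mem_range.mp hk))
    (fun x _ => ZMod.natCast_zmod_val x) (fun _ _ => rfl)

lemma abs_sum_range_add_le {g : ZMod q → ℝ} {M : ℝ} (hg : ∑ x, g x = 0) (hM : ∀ x, |g x| ≤ M)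
    (a : ZMod q) (n : ℕ) : |∑ k ∈ range n, g (a + k)| ≤ (q - 1) * M := by
  induction n using Nat.strong_induction_on with
  | _ n ih =>
    rcases lt_or_ge n q with hn | hn
    · calc |∑ k ∈ range n, g (a + k)| ≤ ∑ k ∈ range n, |g (a + k)| := abs_sum_le_sum_abs _ _
        _ ≤ ∑ k ∈ range n, M := sum_le_sum fun k _ => hM (a + k)
        _ = n * M := by simp
        _ ≤ (q - 1) * M := by
          have : (n : ℝ) ≤ q - 1 := by
            rw [le_sub_iff_add_le]; exact_mod_cast hn
          exact mul_le_mul_of_nonneg_right this ((abs_nonneg _).trans (hM 0))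
    · obtain ⟨m, rfl⟩ := Nat.exists_eq_add_of_le hn
      rw [sum_range_add, sum_range_add_eq_sum_univ, hg, zero_add]
      simpa [add_assoc] using ih m (by have := NeZero.pos q; omega)

lemma abs_sum_Icc_absSinSlope_mul_le {u : ZMod q} (hu : IsUnit u) (n : ℕ) :
    |∑ k ∈ Icc 1 n, absSinSlope q (k * u)| ≤ q - 1 := by
  have := abs_sum_range_add_le (M := 1) (sum_absSinSlope_mul_eq_zero hu)
    (fun x => by unfold absSinSlope; split_ifs <;> simp [abs_cos_le_one]) 1 n
  rw [show Icc 1 n = Ico 1 (n + 1) from rfl, sum_Ico_eq_sum_range]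
  simpa using this

lemma exists_mul_pi_mul_div_eq_val_add_int_mul_pi (p : ℤ) (k : ℕ) :
    ∃ t : ℤ, k * π * (p / q) = π * (k * p : ZMod q).val / q + t * π := by
  have hval : (((k * p : ZMod q).val : ℤ) : ℝ) = ((k * p % q : ℤ) : ℝ) := by
    rw [show (k * p : ZMod q) = ((k * p : ℤ) : ZMod q) by push_cast; rfl, ZMod.val_intCast]
  have hdiv : ((k * p % q : ℤ) : ℝ) + q * ((k * p / q : ℤ) : ℝ) = k * p := by
    exact_mod_cast Int.emod_add_mul_ediv (k * p) q
  push_cast at hval hdiv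
  have hq : (q : ℝ) ≠ 0 := NeZero.ne _
  refine ⟨k * p / q, ?_⟩
  rw [hval, show k * π * (p / q) = π * (k * p) / q by ring, ← hdiv]
  field_simp

lemma linear_sub_sq_le_abs_sin_add_sub (y : ZMod q) {s : ℝ} (hs : |s| ≤ 1) :
    (if y = 0 then |s| else s * absSinSlope q y) - s ^ 2 ≤
      |sin (π * y.val / q + s)| - |sin (π * y.val / q)| := by
  have hq : (0 : ℝ) < q := by exact_mod_cast NeZero.pos q
  split_ifs with hy
  · simpa [hy] using abs_sub_sq_le_abs_sin hs
  · have hpos : 0 < sin (π * y.val / q) := by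
      apply sin_pos_of_pos_of_lt_pi
      · have : (0 : ℝ) < y.val := by exact_mod_cast ZMod.val_pos.mpr hy
        exact div_pos (mul_pos pi_pos this) hq
      · rw [div_lt_iff₀ hq, mul_lt_mul_iff_right₀ pi_pos]
        exact_mod_cast ZMod.val_lt y
    rw [absSinSlope, if_neg hy, abs_of_pos hpos, mul_comm s]
    exact cos_mul_sub_sq_le_abs_sin_add_sub hpos.le hs

lemma linear_sub_sq_le_abs_sin_mul_sub (p : ℤ) {k : ℕ} (hk : 0 < k) {ε : ℝ}
    (hε : k * π * |ε| ≤ 1) :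
    (if (k * p : ZMod q) = 0 then π * |ε| else π * ε * absSinSlope q (k * p)) - π ^ 2 * k * ε ^ 2 ≤
      (|sin (k * π * (p / q + ε))| - |sin (k * π * (p / q))|) / k := by
  obtain ⟨t, ht⟩ := exists_mul_pi_mul_div_eq_val_add_int_mul_pi (q := q) p k
  have hs : |k * π * ε| = k * π * |ε| := by
    rw [abs_mul, abs_of_nonneg (by positivity)]
  have hshift : k * π * (p / q + ε) = π * (k * p : ZMod q).val / q + k * π * ε + t * π := by
    rw [mul_add, ht]; ring
  rw [hshift, ht, abs_sin_add_int_mul_pi, abs_sin_add_int_mul_pi, le_div_iff₀ (by positivity)]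
  refine le_of_eq_of_le ?_ (linear_sub_sq_le_abs_sin_add_sub _ (hs ▸ hε))
  split_ifs
  · rw [hs]; ring
  · ring

theorem mul_abs_sub_sq_le_f_sub (p : ℤ) (hpq : Int.gcd p q = 1) (n : ℕ) {ε : ℝ}
    (hε : n * π * |ε| ≤ 1) :
    π * ((n / q : ℕ) - (q - 1) : ℝ) * |ε| - π ^ 2 * n ^ 2 * ε ^ 2 ≤
      f n (p / q + ε) - f n (p / q) := by
  have hp : IsUnit (p : ZMod q) :=
    (ZMod.coe_int_isUnit_iff_isCoprime p q).mpr
      (Int.isCoprime_iff_gcd_eq_one.mpr (by rwa [Int.gcd_comm]))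
  have hlin : ∑ k ∈ Icc 1 n,
      (if (k * p : ZMod q) = 0 then π * |ε| else π * ε * absSinSlope q (k * p)) =
        (n / q : ℕ) * (π * |ε|) + π * ε * ∑ k ∈ Icc 1 n, absSinSlope q (k * p) := by
    rw [sum_ite, sum_const, card_filter_natCast_mul_eq_zero hp, nsmul_eq_mul, ← mul_sum,
      sum_filter_of_ne]
    intro k _ hk hzero
    simp [absSinSlope, hzero] at hk
  have hquad : ∑ k ∈ Icc 1 n, (k : ℝ) ≤ n ^ 2 := by
    calc ∑ k ∈ Icc 1 n, (k : ℝ) ≤ ∑ k ∈ Icc 1 n, (n : ℝ) :=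
          sum_le_sum fun k hk => by exact_mod_cast (mem_Icc.mp hk).2
      _ = n ^ 2 := by simp [sq]
  have hterm : ∀ k ∈ Icc 1 n,
      (if (k * p : ZMod q) = 0 then π * |ε| else π * ε * absSinSlope q (k * p)) -
          π ^ 2 * k * ε ^ 2 ≤
        (|sin (k * π * (p / q + ε))| - |sin (k * π * (p / q))|) / k := by
    intro k hk
    have hkn : (k : ℝ) ≤ n := by exact_mod_cast (mem_Icc.mp hk).2
    refine linear_sub_sq_le_abs_sin_mul_sub p (mem_Icc.mp hk).1 (le_trans ?_ hε)
    gcongr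
  calc π * ((n / q : ℕ) - (q - 1) : ℝ) * |ε| - π ^ 2 * n ^ 2 * ε ^ 2
      ≤ (n / q : ℕ) * (π * |ε|) + π * ε * ∑ k ∈ Icc 1 n, absSinSlope q (k * p) -
          π ^ 2 * ε ^ 2 * ∑ k ∈ Icc 1 n, (k : ℝ) := by
        have hS : -(|ε| * (q - 1)) ≤ ε * ∑ k ∈ Icc 1 n, absSinSlope q (k * p) := by
          refine le_trans ?_ (neg_abs_le _)
          rw [abs_mul, neg_le_neg_iff]
          exact mul_le_mul_of_nonneg_left (abs_sum_Icc_absSinSlope_mul_le hp n)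
            (abs_nonneg ε)
        have hK := mul_le_mul_of_nonneg_left hquad (by positivity : 0 ≤ π ^ 2 * ε ^ 2)
        nlinarith [pi_pos]
    _ = ∑ k ∈ Icc 1 n, ((if (k * p : ZMod q) = 0 then π * |ε|
          else π * ε * absSinSlope q (k * p)) - π ^ 2 * k * ε ^ 2) := by
        rw [sum_sub_distrib, hlin]
        congr 1
        rw [mul_sum]
        exact sum_congr rfl fun k _ => by ring
    _ ≤ ∑ k ∈ Icc 1 n, (|sin (k * π * (p / q + ε))| - |sin (k * π * (p / q))|) / k :=
        sum_le_sum hterm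
    _ = f n (p / q + ε) - f n (p / q) := by
        simp only [f, ← sum_sub_distrib, sub_div]

end Residues

theorem stmt_14 (p : ℤ) (q : ℕ) (hq : 1 ≤ q) (hpq : Int.gcd p q = 1)
    (n : ℕ) (hn : q ^ 2 ≤ n) :
    ∃ δ > 0, ∃ c > 0, ∃ C : ℝ,
      (∀ ε : ℝ, |ε| < δ →
        f n ((p : ℝ) / q + ε) - f n ((p : ℝ) / q) ≥ c * |ε| - C * ε ^ 2) ∧
      ∃ δ' > 0, ∀ ε : ℝ, |ε| < δ' →
        f n ((p : ℝ) / q + ε) - f n ((p : ℝ) / q) ≥ (c / 2) * |ε| := by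
  have : NeZero q := ⟨by omega⟩
  have hn0 : (0 : ℝ) < n := by exact_mod_cast (show 0 < n by nlinarith)
  have hqn : (q : ℝ) ≤ (n / q : ℕ) := by
    exact_mod_cast (Nat.le_div_iff_mul_le (by omega)).mpr (by nlinarith)
  set c := π * ((n / q : ℕ) - (q - 1) : ℝ)
  set C := π ^ 2 * n ^ 2
  have hc : 0 < c := mul_pos pi_pos (by linarith)
  have hC : 0 < C := by positivity
  set δ := min (1 / (n * π)) (c / (2 * C))
  have hδ : 0 < δ := lt_min (by positivity) (by positivity)
  have hbound : ∀ ε : ℝ, |ε| < δ → c * |ε| - C * ε ^ 2 ≤ f n (p / q + ε) - f n (p / q) := by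
    intro ε hε
    refine mul_abs_sub_sq_le_f_sub p hpq n ?_
    have := (le_div_iff₀' (by positivity)).mp (hε.le.trans (min_le_left _ _))
    linarith
  refine ⟨δ, hδ, c, hc, C, hbound, δ, hδ, fun ε hε => le_trans ?_ (hbound ε hε)⟩
  have hsmall := (le_div_iff₀' (by positivity)).mp (hε.le.trans (min_le_right _ _))
  nlinarith [abs_nonneg ε, sq_abs ε]
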